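/- Let V₁, …, V_N be i.i.d. samples from N(0, σ₀²) with N ≥ 2, and let V_{(1)} ≥ V_{(2)} ≥ ⋯ ≥ V_{(N)} be their decreasing order statistics. For Δ ∈ (0,1), the probability that V_{(2)} ≥ (1 − Δ)·V_{(1)} is at most Δ·N². In particular, with probability at least 1 − Δ·N², the maximum strictly exceeds (1 − Δ) times itself relative to all other samples: max_{n ≠ n*} V_n ≤ (1 − Δ)·V_{n*}, where n* = argmax_n V_n. -/

import Mathlib

open MeasureTheory ProbabilityTheory Real Set Filter
open scoped NNReal ENNReal


lemma aux_integral_Ioi_mul_exp {b : ℝ} (hb : 0 < b) :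
    ∫ x in Set.Ioi (0:ℝ), x * Real.exp (-b * x ^ 2) = (2 * b)⁻¹ := by
  have hder : ∀ x ∈ Set.Ici (0:ℝ),
      HasDerivAt (fun x => -(2*b)⁻¹ * Real.exp (-b * x^2)) (x * Real.exp (-b * x^2)) x := by
    intro x _
    have h1 : HasDerivAt (fun x : ℝ => -b * x^2) (-b * (2*x)) x := by
      simpa using (hasDerivAt_pow 2 x).const_mul (-b)
    have := (h1.exp).const_mul (-(2*b)⁻¹)
    refine this.congr_deriv ?_
    have hk : (2*b)⁻¹ * (2*b) = 1 := inv_mul_cancel₀ (mul_pos two_pos hb).ne'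
    linear_combination (x * Real.exp (-b*x^2)) * hk
  have hint : IntegrableOn (fun x => x * Real.exp (-b*x^2)) (Set.Ioi 0) :=
    (integrable_mul_exp_neg_mul_sq hb).integrableOn
  have htend : Tendsto (fun x => -(2*b)⁻¹ * Real.exp (-b*x^2)) atTop (nhds 0) := by
    have h2 : Tendsto (fun x : ℝ => -b * x^2) atTop atBot := by
      have := (tendsto_pow_atTop (n := 2) (by norm_num)).const_mul_atTop_of_neg (by linarith : -b < 0)
      simpa using this
    have := (Real.tendsto_exp_atBot.comp h2).const_mul (-(2*b)⁻¹)
    simpa using this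
  have := integral_Ioi_of_hasDerivAt_of_tendsto' hder hint htend
  simpa using this

lemma aux_gauss_Icc_le {v : ℝ≥0} (hv : v ≠ 0) (a b : ℝ) :
    gaussianReal 0 v (Set.Icc a b) ≤
      ENNReal.ofReal ((Real.sqrt (2 * π * v))⁻¹) * ENNReal.ofReal (b - a) := by
  rw [gaussianReal_apply _ hv]
  calc ∫⁻ x in Set.Icc a b, gaussianPDF 0 v x
      ≤ ∫⁻ _ in Set.Icc a b, ENNReal.ofReal ((Real.sqrt (2 * π * v))⁻¹) := by
        refine setLIntegral_mono measurable_const fun x _ => ?_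
        rw [gaussianPDF]
        refine ENNReal.ofReal_le_ofReal ?_
        rw [gaussianPDFReal]
        refine mul_le_of_le_one_right (by positivity) ?_
        rw [Real.exp_le_one_iff]
        have : (0:ℝ) ≤ (x - 0)^2 := sq_nonneg _
        have hv2 : (0:ℝ) < 2 * v := by positivity
        exact div_nonpos_of_nonpos_of_nonneg (by linarith) hv2.le
    _ = ENNReal.ofReal ((Real.sqrt (2 * π * v))⁻¹) * volume (Set.Icc a b) := by
        rw [setLIntegral_const]
    _ = _ := by rw [Real.volume_Icc]

lemma aux_pair_bound {v : ℝ≥0} (hv : v ≠ 0) {Δ : ℝ} (hΔ : 0 < Δ) :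
    ((gaussianReal 0 v).prod (gaussianReal 0 v))
      {p : ℝ × ℝ | (1 - Δ) * p.1 ≤ p.2 ∧ p.2 ≤ p.1} ≤ ENNReal.ofReal Δ := by
  have hvR : (0:ℝ) < (v:ℝ) := by positivity
  set γ := gaussianReal 0 v with hγ
  set c : ℝ := (Real.sqrt (2 * π * v))⁻¹ with hc
  have hc0 : 0 < c := by positivity
  set b : ℝ := (2 * (v:ℝ))⁻¹ with hb
  have hb0 : 0 < b := by positivity
  have hS : MeasurableSet {p : ℝ × ℝ | (1 - Δ) * p.1 ≤ p.2 ∧ p.2 ≤ p.1} := by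
    have h1 : MeasurableSet {p : ℝ × ℝ | (1 - Δ) * p.1 ≤ p.2} :=
      measurableSet_le (measurable_fst.const_mul _) measurable_snd
    have h2 : MeasurableSet {p : ℝ × ℝ | p.2 ≤ p.1} :=
      measurableSet_le measurable_snd measurable_fst
    exact h1.inter h2
  -- key integral bound
  have J : ∫⁻ x, ENNReal.ofReal (max x 0) ∂γ ≤ ENNReal.ofReal (c * (v:ℝ)) := by
    rw [hγ, gaussianReal_of_var_ne_zero _ hv,
      lintegral_withDensity_eq_lintegral_mul _ (measurable_gaussianPDF _ _)
        (by fun_prop)]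
    have heq : ∀ x : ℝ, (gaussianPDF 0 v * fun x => ENNReal.ofReal (max x 0)) x
        = ENNReal.ofReal (c * (max x 0 * Real.exp (-b * x^2))) := by
      intro x
      simp only [Pi.mul_apply, gaussianPDF, gaussianPDFReal]
      rw [← ENNReal.ofReal_mul (by positivity)]
      have hexp : -(x - 0)^2 / (2 * (v:ℝ)) = -b * x^2 := by
        rw [hb]; field_simp; ring
      rw [hexp, ← hc]
      ring_nf
    simp_rw [heq]
    have hind : (fun x : ℝ => max x 0 * Real.exp (-b * x^2))
        = Set.indicator (Set.Ioi 0) (fun x => x * Real.exp (-b * x^2)) := by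
      funext x
      rw [Set.indicator_apply]
      by_cases hx : x ∈ Set.Ioi (0:ℝ)
      · rw [if_pos hx, max_eq_left (le_of_lt hx)]
      · rw [if_neg hx, max_eq_right (not_lt.mp (by simpa using hx)), zero_mul]
    have hmax : ∀ x : ℝ, |max x 0| ≤ |x| := by
      intro x
      rw [abs_of_nonneg (le_max_right x 0)]
      exact max_le (le_abs_self x) (abs_nonneg x)
    have hint : Integrable (fun x : ℝ => c * (max x 0 * Real.exp (-b * x^2))) := by
      refine Integrable.const_mul ?_ c
      refine ((integrable_mul_exp_neg_mul_sq hb0).abs).mono' ?_ ?_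
      · exact ((measurable_id.max measurable_const).mul
          (by measurability)).aestronglyMeasurable
      · refine Filter.Eventually.of_forall fun x => ?_
        rw [Real.norm_eq_abs, abs_mul, abs_mul]
        exact mul_le_mul_of_nonneg_right (hmax x) (abs_nonneg _)
    rw [← ofReal_integral_eq_lintegral_ofReal hint
      (Filter.Eventually.of_forall fun x => by positivity)]
    refine ENNReal.ofReal_le_ofReal ?_
    rw [integral_const_mul, hind, integral_indicator measurableSet_Ioi,
      aux_integral_Ioi_mul_exp hb0]
    have h2b : (2 * b)⁻¹ = (v:ℝ) := by rw [hb]; field_simp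
    rw [h2b]
  calc (γ.prod γ) {p : ℝ × ℝ | (1 - Δ) * p.1 ≤ p.2 ∧ p.2 ≤ p.1}
      = ∫⁻ x, γ (Prod.mk x ⁻¹' {p : ℝ × ℝ | (1 - Δ) * p.1 ≤ p.2 ∧ p.2 ≤ p.1}) ∂γ :=
        Measure.prod_apply hS
    _ ≤ ∫⁻ x, ENNReal.ofReal c * ENNReal.ofReal (Δ * max x 0) ∂γ := by
        refine lintegral_mono fun x => ?_
        have hpre : Prod.mk x ⁻¹' {p : ℝ × ℝ | (1 - Δ) * p.1 ≤ p.2 ∧ p.2 ≤ p.1}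
            = Set.Icc ((1 - Δ) * x) x := rfl
        rw [hpre]
        rcases le_or_gt 0 x with hx | hx
        · refine le_trans (aux_gauss_Icc_le hv _ _) ?_
          rw [← hc]
          gcongr
          rw [max_eq_left hx]
          nlinarith
        · rw [Set.Icc_eq_empty (by nlinarith)]
          simp
    _ = ENNReal.ofReal c * ENNReal.ofReal Δ * ∫⁻ x, ENNReal.ofReal (max x 0) ∂γ := by
        simp_rw [ENNReal.ofReal_mul hΔ.le, ← mul_assoc]
        rw [lintegral_const_mul _ (by fun_prop)]
    _ ≤ ENNReal.ofReal c * ENNReal.ofReal Δ * ENNReal.ofReal (c * (v:ℝ)) := by gcongr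
    _ = ENNReal.ofReal (c * Δ * (c * (v:ℝ))) := by
        rw [← ENNReal.ofReal_mul hc0.le, ← ENNReal.ofReal_mul (by positivity)]
    _ ≤ ENNReal.ofReal Δ := by
        refine ENNReal.ofReal_le_ofReal ?_
        have hsq : (Real.sqrt (2 * π * (v:ℝ)))^2 = 2 * π * (v:ℝ) :=
          Real.sq_sqrt (by positivity)
        have hπ : (3:ℝ) < π := Real.pi_gt_three
        have hc2 : c^2 = (2 * π * (v:ℝ))⁻¹ := by rw [hc, inv_pow, hsq]
        have h2 : c^2 * (v:ℝ) = (2*π)⁻¹ := by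
          rw [hc2]; field_simp
        have h3 : (2*π)⁻¹ ≤ 1 := by
          rw [inv_le_one_iff₀]; right; nlinarith
        calc c * Δ * (c * (v:ℝ)) = Δ * (c^2 * (v:ℝ)) := by ring
          _ = Δ * (2*π)⁻¹ := by rw [h2]
          _ ≤ Δ * 1 := mul_le_mul_of_nonneg_left h3 hΔ.le
          _ = Δ := mul_one Δ

lemma aux_map_pair_pi {N : ℕ} (γ : Measure ℝ) [IsProbabilityMeasure γ] {i j : Fin N}
    (hij : i ≠ j) :
    Measure.map (fun f : Fin N → ℝ => (f i, f j)) (Measure.pi fun _ => γ) = γ.prod γ := by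
  classical
  refine (Measure.prod_eq fun s t hs ht => ?_).symm
  rw [Measure.map_apply (by fun_prop) (hs.prod ht)]
  have hpre : (fun f : Fin N → ℝ => (f i, f j)) ⁻¹' (s ×ˢ t) =
      Set.pi Set.univ (fun k => if k = i then s else if k = j then t else Set.univ) := by
    ext f
    simp only [Set.mem_preimage, Set.mem_prod, Set.mem_pi, Set.mem_univ, forall_true_left]
    constructor
    · rintro ⟨h1, h2⟩ k
      by_cases hk : k = i
      · subst hk; simp [h1]
      · by_cases hk2 : k = j
        · subst hk2; simp [hk, h2]
        · simp [hk, hk2]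
    · intro h
      have h1 := h i
      have h2 := h j
      rw [if_pos rfl] at h1
      rw [if_neg hij.symm, if_pos rfl] at h2
      exact ⟨h1, h2⟩
  rw [hpre, Measure.pi_pi]
  rw [← Finset.mul_prod_erase Finset.univ _ (Finset.mem_univ i)]
  rw [← Finset.mul_prod_erase (Finset.univ.erase i) _
    (Finset.mem_erase.mpr ⟨hij.symm, Finset.mem_univ j⟩)]
  rw [if_pos rfl, if_neg hij.symm, if_pos rfl]
  rw [Finset.prod_eq_one, mul_one]
  intro k hk
  simp only [Finset.mem_erase] at hk
  rw [if_neg hk.2.1, if_neg hk.1]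
  exact measure_univ

/-- For `V₁, …, V_N` i.i.d. `N(0, σ₀²)` with `N ≥ 2` and `Δ ∈ (0,1)`, the probability
that the second-largest sample is at least `(1-Δ)` times the largest (i.e. there are
indices `i ≠ j` with `V_i` the maximum and `V_j ≥ (1-Δ) V_i`) is at most `Δ·N²`. -/
theorem stmt_2
    {Ω : Type*} [MeasureSpace Ω] [IsProbabilityMeasure (ℙ : Measure Ω)]
    (N : ℕ) (hN : 2 ≤ N) (σ₀ : ℝ≥0) (hσ : 0 < σ₀)
    (Δ : ℝ) (hΔ : 0 < Δ) (hΔ1 : Δ < 1)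
    (V : Fin N → Ω → ℝ)
    (hV : Measure.map (fun ω i => V i ω) ℙ =
      Measure.pi (fun _ : Fin N => gaussianReal 0 (σ₀ ^ 2))) :
    ℙ {ω | ∃ i j, i ≠ j ∧ (∀ k, V k ω ≤ V i ω) ∧ (1 - Δ) * V i ω ≤ V j ω} ≤
      ENNReal.ofReal (Δ * N ^ 2) := by
  classical
  have hv : (σ₀ ^ 2 : ℝ≥0) ≠ 0 := pow_ne_zero _ hσ.ne'
  set γ := gaussianReal 0 (σ₀ ^ 2) with hγ
  -- a.e. measurability of the joint map
  have hW : AEMeasurable (fun ω i => V i ω) ℙ := by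
    by_contra h
    rw [Measure.map_of_not_aemeasurable h] at hV
    have h0 := congrArg (fun μ : Measure (Fin N → ℝ) => μ Set.univ) hV
    simp [Measure.pi_univ] at h0
  have hS : MeasurableSet {p : ℝ × ℝ | (1 - Δ) * p.1 ≤ p.2 ∧ p.2 ≤ p.1} := by
    have h1 : MeasurableSet {p : ℝ × ℝ | (1 - Δ) * p.1 ≤ p.2} :=
      measurableSet_le (measurable_fst.const_mul _) measurable_snd
    have h2 : MeasurableSet {p : ℝ × ℝ | p.2 ≤ p.1} :=
      measurableSet_le measurable_snd measurable_fst
    exact h1.inter h2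
  -- per-pair events
  set C : Fin N × Fin N → Set Ω := fun p =>
    {ω | p.1 ≠ p.2 ∧ ((1 - Δ) * V p.1 ω ≤ V p.2 ω ∧ V p.2 ω ≤ V p.1 ω)} with hC
  have hsub : {ω | ∃ i j, i ≠ j ∧ (∀ k, V k ω ≤ V i ω) ∧ (1 - Δ) * V i ω ≤ V j ω}
      ⊆ ⋃ p : Fin N × Fin N, C p := by
    rintro ω ⟨i, j, hij, hmax, hge⟩
    exact Set.mem_iUnion.mpr ⟨(i, j), hij, hge, hmax j⟩
  have hCle : ∀ p : Fin N × Fin N, ℙ (C p) ≤ ENNReal.ofReal Δ := by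
    rintro ⟨i, j⟩
    by_cases hij : i = j
    · have : C (i, j) = ∅ := by
        ext ω; simp [hC, hij]
      rw [this]; simp
    · have hpair : AEMeasurable (fun ω => (V i ω, V j ω)) ℙ :=
        ((measurable_pi_apply i).prodMk (measurable_pi_apply j)).comp_aemeasurable hW
      have hmap : Measure.map (fun ω => (V i ω, V j ω)) ℙ = γ.prod γ := by
        have : (fun ω => (V i ω, V j ω))
            = (fun f : Fin N → ℝ => (f i, f j)) ∘ (fun ω k => V k ω) := rfl
        rw [this, ← AEMeasurable.map_map_of_aemeasurable (by fun_prop) hW, hV,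
          aux_map_pair_pi γ hij]
      have hsub2 : C (i, j) ⊆ (fun ω => (V i ω, V j ω)) ⁻¹'
          {p : ℝ × ℝ | (1 - Δ) * p.1 ≤ p.2 ∧ p.2 ≤ p.1} := by
        rintro ω ⟨-, h1, h2⟩
        exact ⟨h1, h2⟩
      calc ℙ (C (i, j)) ≤ ℙ ((fun ω => (V i ω, V j ω)) ⁻¹'
            {p : ℝ × ℝ | (1 - Δ) * p.1 ≤ p.2 ∧ p.2 ≤ p.1}) := measure_mono hsub2
        _ = (γ.prod γ) {p : ℝ × ℝ | (1 - Δ) * p.1 ≤ p.2 ∧ p.2 ≤ p.1} := by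
            rw [← hmap, Measure.map_apply_of_aemeasurable hpair hS]
        _ ≤ ENNReal.ofReal Δ := aux_pair_bound hv hΔ
  calc ℙ {ω | ∃ i j, i ≠ j ∧ (∀ k, V k ω ≤ V i ω) ∧ (1 - Δ) * V i ω ≤ V j ω}
      ≤ ℙ (⋃ p : Fin N × Fin N, C p) := measure_mono hsub
    _ ≤ ∑' p : Fin N × Fin N, ℙ (C p) := measure_iUnion_le C
    _ ≤ ∑' _ : Fin N × Fin N, ENNReal.ofReal Δ := ENNReal.tsum_le_tsum hCle
    _ = (N^2 : ℕ) * ENNReal.ofReal Δ := by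
        rw [tsum_fintype, Finset.sum_const]
        simp [nsmul_eq_mul, sq]
    _ ≤ ENNReal.ofReal (Δ * N ^ 2) := by
        rw [ENNReal.ofReal_mul hΔ.le]
        rw [mul_comm]
        rw [ENNReal.ofReal_pow (by positivity), ENNReal.ofReal_natCast]
        norm_cast
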